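/- arXiv:2207.03109 — 4 statements merged into one kernel-verified Lean document; each statement's English description precedes it below -/
import Mathlib

section
/- Let δ ∈ (0,1), B ≥ 0, and let u : [0,∞) → ℝ be differentiable with u'(t) = β(t)(g(t) - u(t)) where β(t) ∈ [0,1] and |g(t)| ≤ (1-δ) B + δ |u(t)| for all t. If |u(0)| ≤ B, then |u(t)| ≤ B for all t ≥ 0. -/
lemma hasDerivAt_maxsq (a : ℝ) :
    HasDerivAt (fun x : ℝ => max x 0 ^ 2) (2 * max a 0) a := by
  rcases lt_trichotomy a 0 with h | h | h
  · have : (fun x : ℝ => max x 0 ^ 2) =ᶠ[nhds a] fun _ => (0:ℝ) := by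
      filter_upwards [eventually_lt_nhds h] with x hx
      simp [max_eq_right hx.le]
    have h0 : HasDerivAt (fun _ : ℝ => (0:ℝ)) 0 a := hasDerivAt_const _ _
    have := h0.congr_of_eventuallyEq this
    simpa [max_eq_right h.le] using this
  · subst h
    rw [hasDerivAt_iff_isLittleO]
    have : (fun x : ℝ => max x 0 ^ 2) =O[nhds 0] fun x => x * x := by
      refine Asymptotics.isBigO_of_le _ fun x => ?_
      have h1 : |max x 0| ≤ |x| := by
        rcases le_total x 0 with hx | hx
        · simp [max_eq_right hx]
        · simp [max_eq_left hx]
      calc ‖max x 0 ^ 2‖ = |max x 0| * |max x 0| := by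
            rw [sq]; simp [abs_mul, Real.norm_eq_abs]
        _ ≤ |x| * |x| := mul_le_mul h1 h1 (abs_nonneg _) (abs_nonneg _)
        _ = ‖x * x‖ := by simp [abs_mul, Real.norm_eq_abs]
    have h2 : (fun x : ℝ => x * x) =o[nhds 0] fun x => x := by
      have := (Asymptotics.isLittleO_id_const (c := (1:ℝ)) one_ne_zero).mul_isBigO
        (Asymptotics.isBigO_refl (fun x : ℝ => x) (nhds 0))
      simpa using this
    have h3 := this.trans_isLittleO h2
    refine h3.congr' ?_ ?_ <;> filter_upwards with x <;> simp
  · have : (fun x : ℝ => max x 0 ^ 2) =ᶠ[nhds a] fun x => x ^ 2 := by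
      filter_upwards [eventually_gt_nhds h] with x hx
      simp [max_eq_left hx.le]
    have h0 : HasDerivAt (fun x : ℝ => x ^ 2) (2 * a) a := by
      simpa using (hasDerivAt_pow 2 a)
    have := h0.congr_of_eventuallyEq this
    simpa [max_eq_left h.le] using this

/-- Invariance/boundedness of the continuation payoffs: if `u' = β (g - u)` with
`β ∈ [0,1]`, `|g| ≤ (1-δ) B + δ |u|` and `|u 0| ≤ B`, then `|u t| ≤ B` for all `t ≥ 0`. -/
theorem stmt_4 (δ B : ℝ) (hδ : δ ∈ Set.Ioo (0:ℝ) 1) (hB : 0 ≤ B)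
    (u g β : ℝ → ℝ)
    (hu : Differentiable ℝ u)
    (hβ : ∀ t, β t ∈ Set.Icc (0:ℝ) 1)
    (hode : ∀ t, deriv u t = β t * (g t - u t))
    (hg : ∀ t, |g t| ≤ (1 - δ) * B + δ * |u t|)
    (h0 : |u 0| ≤ B) :
    ∀ t, 0 ≤ t → |u t| ≤ B := by
  obtain ⟨hδ0, hδ1⟩ := hδ
  set v : ℝ → ℝ := fun t => max (u t - B) 0 ^ 2 + max (-u t - B) 0 ^ 2 with hv
  have hder : ∀ t, HasDerivAt v
      (2 * max (u t - B) 0 * deriv u t + 2 * max (-u t - B) 0 * (-(deriv u t))) t := by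
    intro t
    have hu' : HasDerivAt u (deriv u t) t := (hu t).hasDerivAt
    have h1 : HasDerivAt (fun s => u s - B) (deriv u t) t := hu'.sub_const B
    have h2 : HasDerivAt (fun s => -u s - B) (-(deriv u t)) t := hu'.neg.sub_const B
    have H1 := (hasDerivAt_maxsq (u t - B)).comp t h1
    have H2 := (hasDerivAt_maxsq (-u t - B)).comp t h2
    simpa [hv, mul_comm, Function.comp_def, Pi.add_def] using H1.add H2
  have hderiv_nonpos : ∀ t, deriv v t ≤ 0 := by
    intro t
    rw [(hder t).deriv]
    rcases (hβ t) with ⟨hb0, hb1⟩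
    have hgt := hg t
    rcases le_or_gt (u t) B with hub | hub
    · rcases le_or_gt (-B) (u t) with hlb | hlb
      · have : max (u t - B) 0 = 0 := max_eq_right (by linarith)
        have h2 : max (-u t - B) 0 = 0 := max_eq_right (by linarith)
        simp [this, h2]
      · -- u t < -B : |u t| = -u t
        have habs : |u t| = -u t := abs_of_neg (by linarith)
        have h1 : max (u t - B) 0 = 0 := max_eq_right (by linarith)
        have h2 : max (-u t - B) 0 = -u t - B := max_eq_left (by linarith)
        rw [h1, h2, hode t]
        have hglb : -(g t) ≤ (1 - δ) * B + δ * (-u t) := by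
          have := neg_abs_le (g t); rw [habs] at hgt; linarith
        have hgu : 0 ≤ g t - u t := by nlinarith
        simp only [mul_zero, zero_mul, zero_add]
        have : 0 ≤ β t * (g t - u t) := mul_nonneg hb0 hgu
        nlinarith
    · -- u t > B : |u t| = u t
      have habs : |u t| = u t := abs_of_pos (by linarith)
      have h1 : max (u t - B) 0 = u t - B := max_eq_left (by linarith)
      have h2 : max (-u t - B) 0 = 0 := max_eq_right (by linarith)
      rw [h1, h2, hode t]
      have hgub : g t ≤ (1 - δ) * B + δ * u t := by
        have := le_abs_self (g t); rw [habs] at hgt; linarith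
      have hgu : g t - u t ≤ 0 := by nlinarith
      simp only [mul_zero, zero_mul, add_zero]
      have : β t * (g t - u t) ≤ 0 := mul_nonpos_of_nonneg_of_nonpos hb0 hgu
      nlinarith
  have hvdiff : Differentiable ℝ v := fun t => (hder t).differentiableAt
  have hanti : AntitoneOn v (Set.Ici (0:ℝ)) := by
    refine antitoneOn_of_deriv_nonpos (convex_Ici 0) hvdiff.continuous.continuousOn
      (fun x _ => (hvdiff x).differentiableWithinAt) (fun x _ => hderiv_nonpos x)
  intro t ht
  have hv0 : v 0 = 0 := by
    have h1 : max (u 0 - B) 0 = 0 := max_eq_right (by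
      have := le_abs_self (u 0); linarith)
    have h2 : max (-u 0 - B) 0 = 0 := max_eq_right (by
      have := neg_abs_le (u 0); linarith)
    simp [hv, h1, h2]
  have hvt : v t ≤ 0 := by
    have := hanti (Set.self_mem_Ici) (Set.mem_Ici.2 ht) ht
    rwa [hv0] at this
  have hnn1 : (0:ℝ) ≤ max (u t - B) 0 ^ 2 := sq_nonneg _
  have hnn2 : (0:ℝ) ≤ max (-u t - B) 0 ^ 2 := sq_nonneg _
  have e1 : max (u t - B) 0 = 0 := by
    have : max (u t - B) 0 ^ 2 = 0 := by simp only [hv] at hvt; nlinarith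
    exact pow_eq_zero_iff (n := 2) (by norm_num) |>.mp this
  have e2 : max (-u t - B) 0 = 0 := by
    have : max (-u t - B) 0 ^ 2 = 0 := by simp only [hv] at hvt; nlinarith
    exact pow_eq_zero_iff (n := 2) (by norm_num) |>.mp this
  have l1 : u t - B ≤ 0 := by
    by_contra h; push_neg at h
    rw [max_eq_left h.le] at e1; linarith
  have l2 : -u t - B ≤ 0 := by
    by_contra h; push_neg at h
    rw [max_eq_left h.le] at e2; linarith
  rw [abs_le]; constructor <;> linarith
end

section
/- Let β : [0,∞) → ℝ⁺ be continuous, δ ∈ (0,1), C > 0, a > 0. Then for all t ≥ 0: ∫₀^t β(v) ∫₀^v 2C e^{-a w} exp(-(1-δ) ∫_w^v β(u) du) dw dv ≤ (2C)/((1-δ) a) (1 - e^{-a t}) ≤ (2C)/((1-δ) a). -/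
/-- Double-integral bound showing integrability of the error term coming from the
exponentially converging model estimators. -/
theorem stmt_7 (β : ℝ → ℝ) (hβcont : Continuous β) (hβpos : ∀ t, 0 ≤ β t)
    (δ C a : ℝ) (hδ : δ ∈ Set.Ioo (0:ℝ) 1) (hC : 0 < C) (ha : 0 < a) :
    ∀ t, 0 ≤ t →
      (∫ v in (0:ℝ)..t, β v *
          ∫ w in (0:ℝ)..v, 2 * C * Real.exp (-a * w) *
            Real.exp (-(1 - δ) * ∫ u in w..v, β u))
        ≤ (2 * C) / ((1 - δ) * a) * (1 - Real.exp (-a * t)) ∧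
      (∫ v in (0:ℝ)..t, β v *
          ∫ w in (0:ℝ)..v, 2 * C * Real.exp (-a * w) *
            Real.exp (-(1 - δ) * ∫ u in w..v, β u))
        ≤ (2 * C) / ((1 - δ) * a) := by
  obtain ⟨hδ0, hδ1⟩ := hδ
  set c : ℝ := 1 - δ with hc
  have hcpos : 0 < c := by simp only [hc]; linarith
  have hcne : c ≠ 0 := ne_of_gt hcpos
  have hane : a ≠ 0 := ne_of_gt ha
  intro t ht
  set B : ℝ → ℝ := fun v => ∫ u in (0:ℝ)..v, β u with hBdef
  have hBderiv : ∀ v, HasDerivAt B (β v) v := fun v =>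
    intervalIntegral.integral_hasDerivAt_right (hβcont.intervalIntegrable 0 v)
      (hβcont.stronglyMeasurableAtFilter _ _) hβcont.continuousAt
  have hBcont : Continuous B :=
    continuous_iff_continuousAt.2 fun v => (hBderiv v).continuousAt
  set gI : ℝ → ℝ := fun w => 2 * C * Real.exp (-a * w) * Real.exp (c * B w) with hgIdef
  have hgIcont : Continuous gI := by
    apply Continuous.mul
    · exact (continuous_const.mul ((continuous_const.mul continuous_id).rexp))
    · exact ((continuous_const.mul hBcont).rexp)
  set g : ℝ → ℝ := fun v => ∫ w in (0:ℝ)..v, gI w with hgdef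
  have hgderiv : ∀ v, HasDerivAt g (gI v) v := fun v =>
    intervalIntegral.integral_hasDerivAt_right (hgIcont.intervalIntegrable 0 v)
      (hgIcont.stronglyMeasurableAtFilter _ _) hgIcont.continuousAt
  have hgcont : Continuous g :=
    continuous_iff_continuousAt.2 fun v => (hgderiv v).continuousAt
  -- rewrite the inner integral
  have hinner : ∀ v : ℝ, (∫ w in (0:ℝ)..v, 2 * C * Real.exp (-a * w) *
      Real.exp (-c * ∫ u in w..v, β u)) = Real.exp (-c * B v) * g v := by
    intro v
    have h1 : ∀ w : ℝ, (∫ u in w..v, β u) = B v - B w := fun w =>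
      (intervalIntegral.integral_interval_sub_left (hβcont.intervalIntegrable 0 v)
        (hβcont.intervalIntegrable 0 w)).symm
    have h2 : ∀ w : ℝ, 2 * C * Real.exp (-a * w) * Real.exp (-c * ∫ u in w..v, β u)
        = Real.exp (-c * B v) * gI w := by
      intro w
      rw [h1 w, hgIdef]
      rw [show -c * (B v - B w) = -c * B v + c * B w by ring, Real.exp_add]
      ring
    simp_rw [h2]
    exact intervalIntegral.integral_const_mul _ _
  -- the antiderivative
  set H : ℝ → ℝ := fun v => (1/c) * (Real.exp (-c * B v) * g v) with hHdef
  set H' : ℝ → ℝ := fun v =>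
    (1/c) * ((Real.exp (-c * B v) * (-c * β v)) * g v + Real.exp (-c * B v) * gI v)
    with hH'def
  have hHderiv : ∀ v, HasDerivAt H (H' v) v := by
    intro v
    have h1 : HasDerivAt (fun v => Real.exp (-c * B v))
        (Real.exp (-c * B v) * (-c * β v)) v := ((hBderiv v).const_mul (-c)).exp
    exact ((h1.mul (hgderiv v)).const_mul (1/c))
  have hH'cont : Continuous H' := by
    apply continuous_const.mul
    apply Continuous.add
    · exact (((continuous_const.mul hBcont).rexp.mul
        (continuous_const.mul hβcont)).mul hgcont)
    · exact ((continuous_const.mul hBcont).rexp.mul hgIcont)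
  -- key pointwise identity
  have hkey : ∀ v : ℝ, β v * (Real.exp (-c * B v) * g v)
      = (2 * C / c) * Real.exp (-a * v) - H' v := by
    intro v
    have hexp : Real.exp (-(c * B v)) * Real.exp (c * B v) = 1 := by
      rw [← Real.exp_add]
      simp
    simp only [hH'def, hgIdef]
    field_simp
    linear_combination (2 * C * Real.exp (-(a * v))) * hexp
  -- rewrite the outer integral
  have houter : (∫ v in (0:ℝ)..t, β v *
      ∫ w in (0:ℝ)..v, 2 * C * Real.exp (-a * w) * Real.exp (-c * ∫ u in w..v, β u))
      = ∫ v in (0:ℝ)..t, ((2 * C / c) * Real.exp (-a * v) - H' v) := by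
    apply intervalIntegral.integral_congr
    intro v _
    dsimp only
    rw [hinner v, hkey v]
  have hintsub : (∫ v in (0:ℝ)..t, ((2 * C / c) * Real.exp (-a * v) - H' v))
      = (∫ v in (0:ℝ)..t, (2 * C / c) * Real.exp (-a * v)) - ∫ v in (0:ℝ)..t, H' v := by
    apply intervalIntegral.integral_sub
    · exact ((continuous_const.mul ((continuous_const.mul continuous_id).rexp))).intervalIntegrable 0 t
    · exact hH'cont.intervalIntegrable 0 t
  have hintH : (∫ v in (0:ℝ)..t, H' v) = H t - H 0 :=
    intervalIntegral.integral_eq_sub_of_hasDerivAt (fun v _ => hHderiv v)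
      (hH'cont.intervalIntegrable 0 t)
  have hintE : (∫ v in (0:ℝ)..t, (2 * C / c) * Real.exp (-a * v))
      = (2 * C) / (c * a) * (1 - Real.exp (-a * t)) := by
    have hF : ∀ v : ℝ, HasDerivAt (fun v => (2 * C) / (c * a) * (1 - Real.exp (-a * v)))
        ((2 * C / c) * Real.exp (-a * v)) v := by
      intro v
      have h1 : HasDerivAt (fun v : ℝ => Real.exp (-a * v)) (Real.exp (-a * v) * (-a)) v := by
        simpa using ((hasDerivAt_id v).const_mul (-a)).exp
      have h2 := ((hasDerivAt_const v (1:ℝ)).sub h1).const_mul ((2 * C) / (c * a))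
      convert h2 using 1
      · rfl
      · rfl
      · rfl
      have hca : (2 * C) / (c * a) * a = 2 * C / c := by
        rw [← div_div, div_mul_cancel₀ _ hane]
      linear_combination (-Real.exp (-a * v)) * hca
    rw [intervalIntegral.integral_eq_sub_of_hasDerivAt (fun v _ => hF v)
      (((continuous_const.mul ((continuous_const.mul continuous_id).rexp))).intervalIntegrable 0 t)]
    simp
  have hB0 : B 0 = 0 := intervalIntegral.integral_same
  have hg0 : g 0 = 0 := intervalIntegral.integral_same
  have hH0 : H 0 = 0 := by simp [hHdef, hg0]
  have hHt : 0 ≤ H t := by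
    have hgt : 0 ≤ g t := by
      apply intervalIntegral.integral_nonneg ht
      intro w _
      have := Real.exp_pos (-a * w)
      have := Real.exp_pos (c * B w)
      positivity
    have := Real.exp_pos (-c * B t)
    positivity
  have h1 : (∫ v in (0:ℝ)..t, β v *
      ∫ w in (0:ℝ)..v, 2 * C * Real.exp (-a * w) * Real.exp (-c * ∫ u in w..v, β u))
      ≤ (2 * C) / (c * a) * (1 - Real.exp (-a * t)) := by
    rw [houter, hintsub, hintH, hintE, hH0]
    linarith
  have hle1 : Real.exp (-a * t) ≤ 1 := by
    apply Real.exp_le_one_iff.2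
    nlinarith
  have hconst : 0 < (2 * C) / (c * a) := by positivity
  constructor
  · exact h1
  · calc _ ≤ (2 * C) / (c * a) * (1 - Real.exp (-a * t)) := h1
      _ ≤ (2 * C) / (c * a) * 1 := by
          apply mul_le_mul_of_nonneg_left _ (le_of_lt hconst)
          linarith [Real.exp_pos (-a * t)]
      _ = (2 * C) / (c * a) := mul_one _
end

section
/- Let F, u : [0,∞) → ℝ be continuous with u differentiable, u'(t) = β(t)(F(t) - u(t)), where β : [0,∞) → ℝ⁺ is continuous decreasing with ∫₀^∞ β = +∞. If u is bounded and F(t) → L as t → ∞, then u(t) → L as t → ∞. -/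
open Filter Topology

/-- Averaging lemma: if `u' = β (F - u)` with `β` continuous decreasing positive and
`∫₀^∞ β = ∞`, `u` bounded and `F → L`, then `u → L`. -/
theorem stmt_15 (F u β : ℝ → ℝ) (L : ℝ)
    (hF : Continuous F) (hu : Continuous u) (hudiff : Differentiable ℝ u)
    (hode : ∀ t, deriv u t = β t * (F t - u t))
    (hβcont : Continuous β) (hβdec : ∀ s t, s ≤ t → β t ≤ β s)
    (hβpos : ∀ t, 0 < β t)
    (hβint : Tendsto (fun t => ∫ v in (0:ℝ)..t, β v) atTop atTop)
    (hbound : ∃ M, ∀ t, |u t| ≤ M)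
    (hFlim : Tendsto F atTop (𝓝 L)) :
    Tendsto u atTop (𝓝 L) := by
  set B : ℝ → ℝ := fun t => ∫ v in (0:ℝ)..t, β v with hBdef
  have hB : ∀ t, HasDerivAt B (β t) t := fun t =>
    (hβcont.integral_hasStrictDerivAt 0 t).hasDerivAt
  have hBcont : Continuous B := by
    apply continuous_iff_continuousAt.mpr
    intro t
    exact (hB t).continuousAt
  set g : ℝ → ℝ := fun t => (u t - L) * Real.exp (B t) with hgdef
  have hg : ∀ t, HasDerivAt g (β t * (F t - L) * Real.exp (B t)) t := by
    intro t
    have h1 := (((hudiff t).hasDerivAt).sub_const L).mul ((hB t).exp)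
    convert h1 using 1
    · rfl
    · rfl
    · rfl
    rw [hode]; ring
  have hcontd : Continuous fun s => β s * (F s - L) * Real.exp (B s) := by
    exact ((hβcont.mul (hF.sub continuous_const)).mul (Real.continuous_exp.comp hBcont))
  -- key estimate
  have key : ∀ ε' : ℝ, 0 < ε' → ∀ T, (∀ s, T ≤ s → |F s - L| ≤ ε') →
      ∀ t, T ≤ t → |u t - L| ≤ |g T| * Real.exp (-(B t)) + ε' := by
    intro ε' hε' T hT t ht
    have hBmono : B T ≤ B t := by
      have h0 : (0:ℝ) ≤ ∫ s in T..t, β s :=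
        intervalIntegral.integral_nonneg ht (fun s _ => (hβpos s).le)
      have hadd : (∫ v in (0:ℝ)..T, β v) + ∫ v in T..t, β v = ∫ v in (0:ℝ)..t, β v :=
        intervalIntegral.integral_add_adjacent_intervals
          (hβcont.intervalIntegrable _ _) (hβcont.intervalIntegrable _ _)
      simp only [hBdef]
      linarith [hadd]
    have h1 : g t - g T = ∫ s in T..t, β s * (F s - L) * Real.exp (B s) := by
      rw [intervalIntegral.integral_eq_sub_of_hasDerivAt
        (fun s _ => hg s) (hcontd.intervalIntegrable _ _)]
    have hexp : (∫ s in T..t, β s * Real.exp (B s)) = Real.exp (B t) - Real.exp (B T) := by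
      rw [intervalIntegral.integral_eq_sub_of_hasDerivAt
        (f := fun s => Real.exp (B s)) (f' := fun s => β s * Real.exp (B s))
        (fun s _ => by simpa [mul_comm] using (hB s).exp)
        ((hβcont.mul (Real.continuous_exp.comp hBcont)).intervalIntegrable _ _)]
    have h2 : |∫ s in T..t, β s * (F s - L) * Real.exp (B s)|
        ≤ ε' * (Real.exp (B t) - Real.exp (B T)) := by
      calc |∫ s in T..t, β s * (F s - L) * Real.exp (B s)|
          ≤ ∫ s in T..t, |β s * (F s - L) * Real.exp (B s)| :=
            intervalIntegral.abs_integral_le_integral_abs ht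
        _ ≤ ∫ s in T..t, ε' * (β s * Real.exp (B s)) := by
            apply intervalIntegral.integral_mono_on ht
            · exact (hcontd.abs.intervalIntegrable _ _)
            · exact ((continuous_const.mul
                (hβcont.mul (Real.continuous_exp.comp hBcont))).intervalIntegrable _ _)
            · intro s hs
              have hFs : |F s - L| ≤ ε' := hT s hs.1
              have hβs := (hβpos s).le
              have hes := (Real.exp_pos (B s)).le
              rw [abs_mul, abs_mul, abs_of_nonneg hβs, abs_of_nonneg hes]
              nlinarith [mul_nonneg (sub_nonneg.mpr hFs) (mul_nonneg hβs hes)]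
        _ = ε' * (Real.exp (B t) - Real.exp (B T)) := by
            rw [intervalIntegral.integral_const_mul, hexp]
    have h3 : |g t| ≤ |g T| + ε' * (Real.exp (B t) - Real.exp (B T)) := by
      calc |g t| = |g T + (g t - g T)| := by ring_nf
        _ ≤ |g T| + |g t - g T| := abs_add_le _ _
        _ ≤ |g T| + ε' * (Real.exp (B t) - Real.exp (B T)) := by
            rw [h1] at *; linarith [h2]
    have hept : (0:ℝ) < Real.exp (B t) := Real.exp_pos _
    have hgabs : |g t| = |u t - L| * Real.exp (B t) := by
      rw [hgdef]; simp [abs_mul, abs_of_pos hept]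
    have heT : (0:ℝ) < Real.exp (B T) := Real.exp_pos _
    rw [hgabs] at h3
    have h4 : |u t - L| - ε' ≤ |g T| / Real.exp (B t) := by
      rw [le_div_iff₀ hept]
      nlinarith [mul_pos hε' heT]
    rw [Real.exp_neg, ← div_eq_mul_inv]
    linarith
  -- conclude
  rw [Metric.tendsto_atTop]
  intro ε hε
  obtain ⟨T, hT⟩ := Metric.tendsto_atTop.mp hFlim (ε/2) (by linarith)
  have hT' : ∀ s, T ≤ s → |F s - L| ≤ ε/2 := fun s hs => by
    have := hT s hs; rw [Real.dist_eq] at this; linarith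
  have hexp0 : Tendsto (fun t => Real.exp (-(B t))) atTop (𝓝 0) := by
    apply Real.tendsto_exp_atBot.comp
    exact tendsto_neg_atBot_iff.mpr hβint
  have hprod : Tendsto (fun t => |g T| * Real.exp (-(B t))) atTop (𝓝 0) := by
    simpa using (tendsto_const_nhds (x := |g T|)).mul hexp0
  obtain ⟨N, hN⟩ := Metric.tendsto_atTop.mp hprod (ε/2) (by linarith)
  refine ⟨max T N, fun t ht => ?_⟩
  have htT : T ≤ t := le_trans (le_max_left _ _) ht
  have htN : N ≤ t := le_trans (le_max_right _ _) ht
  have h1 := key (ε/2) (by linarith) T hT' t htT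
  have h2 := hN t htN
  rw [Real.dist_eq] at h2 ⊢
  simp only [sub_zero] at h2
  have h3 : |g T| * Real.exp (-(B t)) < ε/2 := lt_of_abs_lt h2
  linarith
end

section
/- Let S be finite, δ ∈ (0,1), and for each s ∈ S let Γ_s, u_s : [0,∞) → ℝ be locally Lipschitz with u_s'(t) = β(t)(Γ_s(t) - u_s(t)) for a continuous decreasing β : [0,∞) → ℝ⁺ with ∫₀^∞ β = ∞. Suppose that for the minimizing state s₋(t) ∈ argmin_s (Γ_s(t) - u_s(t)) one has, for almost every t, d/dt (Γ_{s₋(t)}(t) - u_{s₋(t)}(t)) ≥ -2C e^{-a t} + β(t)(δ - 1)(Γ_{s₋(t)}(t) - u_{s₋(t)}(t)) for constants C, a > 0. Then for every s ∈ S, Γ_s(t) - u_s(t) ≥ y(t), where y solves y' = -2C e^{-a t} + β(t)(δ-1)y with y(0) = min_s (Γ_s(0) - u_s(0)). -/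
open MeasureTheory Filter Set Topology NNReal

section Aux

/-- A locally Lipschitz real function is Lipschitz on every compact set. -/
lemma locallyLipschitz_exists_lipschitzOnWith {f : ℝ → ℝ}
    (hf : LocallyLipschitz f) {s : Set ℝ} (hs : IsCompact s) :
    ∃ K : ℝ≥0, LipschitzOnWith K f s := by
  by_contra hcon
  push_neg at hcon
  have H : ∀ n : ℕ, ∃ q : ℝ × ℝ, q.1 ∈ s ∧ q.2 ∈ s ∧
      ((n : ℝ) + 1) * dist q.1 q.2 < dist (f q.1) (f q.2) := by
    intro n
    have h1 := hcon (n + 1 : ℝ≥0)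
    rw [lipschitzOnWith_iff_dist_le_mul] at h1
    push_neg at h1
    obtain ⟨x, hx, y, hy, hxy⟩ := h1
    refine ⟨(x, y), hx, hy, ?_⟩
    have : ((n + 1 : ℝ≥0) : ℝ) = (n : ℝ) + 1 := by push_cast; ring
    simpa [this] using hxy
  choose q hq1 hq2 hq3 using H
  obtain ⟨M, hM⟩ := hs.exists_bound_of_continuousOn hf.continuous.continuousOn
  have hM0 : 0 ≤ M := le_trans (norm_nonneg _) (hM _ (hq1 0))
  have hdb : ∀ n : ℕ, dist (q n).1 (q n).2 ≤ (2 * M + 1) / ((n : ℝ) + 1) := by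
    intro n
    have h2 : dist (f (q n).1) (f (q n).2) ≤ 2 * M := by
      calc dist (f (q n).1) (f (q n).2) ≤ ‖f (q n).1‖ + ‖f (q n).2‖ := dist_le_norm_add_norm _ _
        _ ≤ M + M := add_le_add (hM _ (hq1 n)) (hM _ (hq2 n))
        _ = 2 * M := by ring
    have h3 := hq3 n
    have hn1 : (0:ℝ) < (n : ℝ) + 1 := by positivity
    rw [le_div_iff₀ hn1]
    nlinarith [dist_nonneg (x := (q n).1) (y := (q n).2)]
  have hd0 : Tendsto (fun n : ℕ => dist (q n).1 (q n).2) atTop (𝓝 0) := by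
    apply squeeze_zero (fun n => dist_nonneg) hdb
    have := tendsto_one_div_add_atTop_nhds_zero_nat.const_mul (2 * M + 1)
    simpa [div_eq_mul_inv] using this
  obtain ⟨x, hxs, φ, hφ, hconv⟩ := hs.tendsto_subseq hq1
  obtain ⟨K, t, ht, hK⟩ := hf x
  obtain ⟨r, hr0, hball⟩ := Metric.mem_nhds_iff.1 ht
  have hr2 : 0 < r / 2 := by positivity
  have e1 : ∀ᶠ n : ℕ in atTop, dist ((q (φ n)).1) x < r / 2 := by
    have := hconv.eventually_mem (Metric.ball_mem_nhds x hr2)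
    filter_upwards [this] with n hn
    simpa [Metric.mem_ball] using hn
  have e2 : ∀ᶠ n : ℕ in atTop, dist (q (φ n)).1 (q (φ n)).2 < r / 2 :=
    (hd0.comp hφ.tendsto_atTop).eventually (eventually_lt_nhds hr2)
  have e3 : ∀ᶠ n : ℕ in atTop, (K : ℝ) ≤ (n : ℝ) := by
    filter_upwards [eventually_ge_atTop ⌈(K : ℝ)⌉₊] with n hn
    calc (K : ℝ) ≤ (⌈(K : ℝ)⌉₊ : ℝ) := Nat.le_ceil _
      _ ≤ (n : ℝ) := by exact_mod_cast hn
  obtain ⟨n, h1, h2, h3⟩ := (e1.and (e2.and e3)).exists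
  set X := (q (φ n)).1
  set Y := (q (φ n)).2
  have hX : X ∈ t := hball (by simpa [Metric.mem_ball] using lt_of_lt_of_le h1 (by linarith))
  have hY : Y ∈ t := by
    apply hball
    have : dist Y x ≤ dist Y X + dist X x := dist_triangle _ _ _
    have hYX : dist Y X = dist X Y := dist_comm _ _
    simp only [Metric.mem_ball]
    linarith [h1, h2, hYX ▸ this]
  have hdk := (lipschitzOnWith_iff_dist_le_mul.1 hK) X hX Y hY
  have hlt := hq3 (φ n)
  have hdpos : 0 < dist X Y := by
    rcases lt_or_eq_of_le (dist_nonneg (x := X) (y := Y)) with h | h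
    · exact h
    · exfalso
      have hXY : X = Y := dist_eq_zero.1 h.symm
      have hlt' := hq3 (φ n)
      rw [show (q (φ n)).1 = X from rfl, show (q (φ n)).2 = Y from rfl, hXY] at hlt'
      simp at hlt'
  have hlt2 : ((φ n : ℝ) + 1) < (K : ℝ) := by
    have : ((φ n : ℝ) + 1) * dist X Y < (K : ℝ) * dist X Y := lt_of_lt_of_le hlt hdk
    exact lt_of_mul_lt_mul_right this hdpos.le
  have hφn : (n : ℝ) ≤ (φ n : ℝ) := by exact_mod_cast hφ.le_apply
  linarith

/-- Product of locally Lipschitz real functions is locally Lipschitz. -/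
lemma locallyLipschitz_mul {f g : ℝ → ℝ} (hf : LocallyLipschitz f) (hg : LocallyLipschitz g) :
    LocallyLipschitz fun x => f x * g x := by
  intro x
  obtain ⟨K₁, t₁, ht₁, h₁⟩ := hf x
  obtain ⟨K₂, t₂, ht₂, h₂⟩ := hg x
  obtain ⟨r, hr0, hball⟩ := Metric.mem_nhds_iff.1 (Filter.inter_mem ht₁ ht₂)
  set M₁ : ℝ := |f x| + K₁ * r with hM₁def
  set M₂ : ℝ := |g x| + K₂ * r with hM₂def
  have hM₁0 : 0 ≤ M₁ := by positivity
  have hM₂0 : 0 ≤ M₂ := by positivity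
  have hxball : x ∈ Metric.ball x r := Metric.mem_ball_self hr0
  have hM₁ : ∀ y ∈ Metric.ball x r, |f y| ≤ M₁ := by
    intro y hy
    have h1 := (lipschitzOnWith_iff_dist_le_mul.1 h₁) y (hball hy).1 x (hball hxball).1
    have h2 : dist y x < r := Metric.mem_ball.1 hy
    rw [Real.dist_eq] at h1
    have h4 := abs_sub_abs_le_abs_sub (f y) (f x)
    have hd0 : (0:ℝ) ≤ dist y x := dist_nonneg
    nlinarith [K₁.coe_nonneg]
  have hM₂ : ∀ y ∈ Metric.ball x r, |g y| ≤ M₂ := by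
    intro y hy
    have h1 := (lipschitzOnWith_iff_dist_le_mul.1 h₂) y (hball hy).2 x (hball hxball).2
    have h2 : dist y x < r := Metric.mem_ball.1 hy
    rw [Real.dist_eq] at h1
    have h4 := abs_sub_abs_le_abs_sub (g y) (g x)
    have hd0 : (0:ℝ) ≤ dist y x := dist_nonneg
    nlinarith [K₂.coe_nonneg]
  refine ⟨(M₁ * K₂ + M₂ * K₁).toNNReal, Metric.ball x r, Metric.ball_mem_nhds x hr0,
    lipschitzOnWith_iff_dist_le_mul.2 ?_⟩
  intro p hp z hz
  have hfp := hM₁ p hp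
  have hgz := hM₂ z hz
  have l1 := (lipschitzOnWith_iff_dist_le_mul.1 h₁) p (hball hp).1 z (hball hz).1
  have l2 := (lipschitzOnWith_iff_dist_le_mul.1 h₂) p (hball hp).2 z (hball hz).2
  have hcoe : (((M₁ * K₂ + M₂ * K₁).toNNReal : ℝ≥0) : ℝ) = M₁ * K₂ + M₂ * K₁ :=
    Real.coe_toNNReal _ (by positivity)
  rw [Real.dist_eq, hcoe]
  rw [Real.dist_eq] at l1 l2
  have key : |f p * g p - f z * g z| ≤ |f p| * |g p - g z| + |g z| * |f p - f z| := by
    have : f p * g p - f z * g z = f p * (g p - g z) + g z * (f p - f z) := by ring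
    rw [this]
    calc |f p * (g p - g z) + g z * (f p - f z)|
        ≤ |f p * (g p - g z)| + |g z * (f p - f z)| := abs_add_le _ _
      _ = |f p| * |g p - g z| + |g z| * |f p - f z| := by rw [abs_mul, abs_mul]
  have b1 : |f p| * |g p - g z| ≤ M₁ * ((K₂ : ℝ) * dist p z) :=
    mul_le_mul hfp (by simpa [Real.dist_eq] using l2) (abs_nonneg _) hM₁0
  have b2 : |g z| * |f p - f z| ≤ M₂ * ((K₁ : ℝ) * dist p z) :=
    mul_le_mul hgz (by simpa [Real.dist_eq] using l1) (abs_nonneg _) hM₂0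
  calc |f p * g p - f z * g z| ≤ |f p| * |g p - g z| + |g z| * |f p - f z| := key
    _ ≤ M₁ * ((K₂ : ℝ) * dist p z) + M₂ * ((K₁ : ℝ) * dist p z) := add_le_add b1 b2
    _ = (M₁ * ↑K₂ + M₂ * ↑K₁) * dist p z := by ring
    _ = (M₁ * ↑K₂ + M₂ * ↑K₁) * |p - z| := by rw [Real.dist_eq]

/-- Extend a locally Lipschitz function by clamping, to a globally Lipschitz function that
agrees with it on `Icc a b` and whose derivative agrees on `Ioo a b`. -/
lemma locallyLipschitz_exists_ext {f : ℝ → ℝ} (hf : LocallyLipschitz f) (a b : ℝ) :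
    ∃ g : ℝ → ℝ, (∃ K : ℝ≥0, LipschitzWith K g) ∧ (∀ x ∈ Set.Icc a b, g x = f x) ∧
      (∀ x ∈ Set.Ioo a b, deriv g x = deriv f x ∧
        (DifferentiableAt ℝ g x → DifferentiableAt ℝ f x)) := by
  rcases le_or_gt a b with hab | hab
  · obtain ⟨K, hK⟩ := locallyLipschitz_exists_lipschitzOnWith hf (isCompact_Icc (a := a) (b := b))
    set c : ℝ → ℝ := fun x => max (min x b) a with hc
    have hc1 : LipschitzWith 1 c := by
      have h1 : LipschitzWith (max (max 1 0) 0) c :=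
        (LipschitzWith.id.min (LipschitzWith.const b)).max (LipschitzWith.const a)
      exact h1.weaken (by simp)
    have hmaps : ∀ x, c x ∈ Set.Icc a b :=
      fun x => ⟨le_max_right _ _, max_le (min_le_right x b) hab⟩
    have hcid : ∀ x ∈ Set.Icc a b, c x = x := by
      intro x hx
      simp only [hc]
      rw [min_eq_left hx.2, max_eq_left hx.1]
    have heqIcc : ∀ x ∈ Set.Icc a b, (f ∘ c) x = f x := by
      intro x hx; simp [Function.comp, hcid x hx]
    refine ⟨f ∘ c, ⟨K, LipschitzWith.of_dist_le_mul fun x y => ?_⟩, heqIcc, ?_⟩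
    · calc dist ((f ∘ c) x) ((f ∘ c) y) ≤ (K : ℝ) * dist (c x) (c y) :=
          (lipschitzOnWith_iff_dist_le_mul.1 hK) _ (hmaps x) _ (hmaps y)
        _ ≤ (K : ℝ) * dist x y := by
            have := hc1.dist_le_mul x y
            have h1 : dist (c x) (c y) ≤ dist x y := by simpa using this
            exact mul_le_mul_of_nonneg_left h1 K.coe_nonneg
    · intro x hx
      have heq : (f ∘ c) =ᶠ[nhds x] f := by
        filter_upwards [isOpen_Ioo.mem_nhds hx] with z hz
        exact heqIcc z (Set.Ioo_subset_Icc_self hz)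
      exact ⟨heq.deriv_eq, fun hd => hd.congr_of_eventuallyEq heq.symm⟩
  · refine ⟨fun _ => f a, ⟨0, LipschitzWith.const (f a)⟩, ?_, ?_⟩
    · intro x hx; exact absurd (hx.1.trans hx.2) (not_le.2 hab)
    · intro x hx; exact absurd (hx.1.trans hx.2) (asymm hab)

/-- Rademacher for locally Lipschitz real functions. -/
lemma locallyLipschitz_ae_differentiable {f : ℝ → ℝ} (hf : LocallyLipschitz f) :
    ∀ᵐ x ∂(volume : Measure ℝ), DifferentiableAt ℝ f x := by
  have H : ∀ n : ℕ, ∀ᵐ x ∂(volume : Measure ℝ),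
      x ∈ Set.Ioo (-(n : ℝ)) (n : ℝ) → DifferentiableAt ℝ f x := by
    intro n
    obtain ⟨g, ⟨K, hK⟩, -, hIoo⟩ := locallyLipschitz_exists_ext hf (-(n : ℝ)) (n : ℝ)
    filter_upwards [hK.ae_differentiableAt_real] with x hx hxI
    exact (hIoo x hxI).2 hx
  filter_upwards [ae_all_iff.2 H] with x hx
  obtain ⟨n, hn⟩ := exists_nat_gt |x|
  exact hx n ⟨neg_lt_of_abs_lt hn, lt_of_abs_lt hn⟩

/-- FTC for globally Lipschitz real functions. -/
lemma lipschitzWith_sub_eq_integral_deriv {f : ℝ → ℝ} {K : ℝ≥0} (hf : LipschitzWith K f)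
    (a b : ℝ) : f b - f a = ∫ x in a..b, deriv f x := by
  have hcont := hf.continuous
  set ε : ℕ → ℝ := fun n => (1 : ℝ) / ((n : ℝ) + 1) with hε
  have hε0 : ∀ n, 0 < ε n := fun n => by positivity
  have hεlim : Tendsto ε atTop (𝓝 0) := tendsto_one_div_add_atTop_nhds_zero_nat
  set F : ℕ → ℝ → ℝ := fun n x => (f (x + ε n) - f x) / ε n with hF
  have hbound : ∀ n x, |F n x| ≤ (K : ℝ) := by
    intro n x
    rw [hF]
    simp only [abs_div, abs_of_pos (hε0 n)]
    rw [div_le_iff₀ (hε0 n)]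
    have h1 := hf.dist_le_mul (x + ε n) x
    rw [Real.dist_eq, Real.dist_eq] at h1
    have h2 : |x + ε n - x| = ε n := by
      rw [add_sub_cancel_left]; exact abs_of_pos (hε0 n)
    rw [h2] at h1
    exact h1
  have hmem : ∀ x : ℝ, Tendsto (fun n => x + ε n) atTop (𝓝[≠] x) := by
    intro x
    rw [tendsto_nhdsWithin_iff]
    constructor
    · have := tendsto_const_nhds (x := x) (f := atTop (α := ℕ)).add hεlim
      simpa using this
    · filter_upwards with n
      exact ne_of_gt (lt_add_of_pos_right x (hε0 n))
  have hconv : ∀ᵐ x ∂(volume : Measure ℝ),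
      Tendsto (fun n => F n x) atTop (𝓝 (deriv f x)) := by
    filter_upwards [hf.ae_differentiableAt_real] with x hx
    have hd := hx.hasDerivAt
    have h1 := (hasDerivAt_iff_tendsto_slope.1 hd).comp (hmem x)
    have h2 : (fun n => F n x) = (slope f x) ∘ (fun n => x + ε n) := by
      funext n
      simp [hF, slope_def_field, Function.comp, add_sub_cancel_left]
    rw [h2]
    exact h1
  have hint : Tendsto (fun n => ∫ x in a..b, F n x) atTop
      (𝓝 (∫ x in a..b, deriv f x)) := by
    apply intervalIntegral.tendsto_integral_filter_of_dominated_convergence (fun _ => (K : ℝ))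
    · filter_upwards with n
      exact (((hcont.comp (continuous_id.add continuous_const)).sub hcont).div_const
        _).aestronglyMeasurable.restrict
    · filter_upwards with n
      filter_upwards with x _
      simpa [Real.norm_eq_abs] using hbound n x
    · exact intervalIntegrable_const
    · filter_upwards [hconv] with x hx _
      exact hx
  have hIg : ∀ c d : ℝ, IntervalIntegrable f volume c d := fun c d =>
    hcont.intervalIntegrable c d
  have hval : ∀ n, ∫ x in a..b, F n x =
      ((∫ x in b..(b + ε n), f x) - ∫ x in a..(a + ε n), f x) / ε n := by
    intro n
    have h1 : ∫ x in a..b, F n x = (∫ x in a..b, (f (x + ε n) - f x)) / ε n := by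
      simp only [hF]
      exact intervalIntegral.integral_div _ _
    have hIc : IntervalIntegrable (fun x => f (x + ε n)) volume a b :=
      (hcont.comp (continuous_id.add continuous_const)).intervalIntegrable a b
    have h2 : ∫ x in a..b, (f (x + ε n) - f x) =
        (∫ x in a..b, f (x + ε n)) - ∫ x in a..b, f x :=
      intervalIntegral.integral_sub hIc (hIg a b)
    have h3 : ∫ x in a..b, f (x + ε n) = ∫ x in (a + ε n)..(b + ε n), f x :=
      intervalIntegral.integral_comp_add_right f (ε n)
    have hA := intervalIntegral.integral_add_adjacent_intervals
      (hIg a (a + ε n)) (hIg (a + ε n) (b + ε n))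
    have hB := intervalIntegral.integral_add_adjacent_intervals
      (hIg a b) (hIg b (b + ε n))
    rw [h1, h2, h3]
    have : (∫ x in (a + ε n)..(b + ε n), f x) - ∫ x in a..b, f x
        = (∫ x in b..(b + ε n), f x) - ∫ x in a..(a + ε n), f x := by linarith
    rw [this]
  have hlim : ∀ c : ℝ, Tendsto (fun n => (∫ x in c..(c + ε n), f x) / ε n) atTop (𝓝 (f c)) := by
    intro c
    have hF' : HasDerivAt (fun u => ∫ x in c..u, f x) (f c) c :=
      intervalIntegral.integral_hasDerivAt_right (hIg c c)
        (hcont.stronglyMeasurableAtFilter _ _) hcont.continuousAt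
    have h1 := (hasDerivAt_iff_tendsto_slope.1 hF').comp (hmem c)
    have h2 : (fun n => (∫ x in c..(c + ε n), f x) / ε n)
        = (slope (fun u => ∫ x in c..u, f x) c) ∘ (fun n => c + ε n) := by
      funext n
      simp [slope_def_field, Function.comp, add_sub_cancel_left,
        intervalIntegral.integral_same]
    rw [h2]
    exact h1
  have hfin : Tendsto (fun n => ∫ x in a..b, F n x) atTop (𝓝 (f b - f a)) := by
    have h1 : Tendsto (fun n => (∫ x in b..(b + ε n), f x) / ε n
        - (∫ x in a..(a + ε n), f x) / ε n) atTop (𝓝 (f b - f a)) :=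
      (hlim b).sub (hlim a)
    apply h1.congr
    intro n
    rw [hval n]; ring
  exact tendsto_nhds_unique hfin hint

/-- A locally Lipschitz function with a.e. nonnegative derivative on `[0,∞)` is
nondecreasing from `0`. -/
lemma locallyLipschitz_mono_of_deriv_nonneg {f : ℝ → ℝ} (hf : LocallyLipschitz f)
    (hd : ∀ᵐ x ∂(volume : Measure ℝ), 0 ≤ x → 0 ≤ deriv f x) {T : ℝ} (hT : 0 ≤ T) :
    f 0 ≤ f T := by
  obtain ⟨g, ⟨K, hK⟩, hicc, hioo⟩ := locallyLipschitz_exists_ext hf (-1) (T + 1)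
  have h0 : g 0 = f 0 := hicc 0 ⟨by linarith, by linarith⟩
  have hTg : g T = f T := hicc T ⟨by linarith, by linarith⟩
  have hftc := lipschitzWith_sub_eq_integral_deriv hK 0 T
  have hnn : 0 ≤ ∫ x in (0:ℝ)..T, deriv g x := by
    apply intervalIntegral.integral_nonneg_of_ae_restrict hT
    filter_upwards [ae_restrict_of_ae hd, ae_restrict_mem measurableSet_Icc] with x h1 h2
    have hx : x ∈ Set.Ioo (-1 : ℝ) (T + 1) := ⟨by linarith [h2.1], by linarith [h2.2]⟩
    rw [(hioo x hx).1]
    exact h1 h2.1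
  rw [← h0, ← hTg]
  linarith [hftc ▸ hnn]

/-- The pointwise `inf'` over a finite set of locally Lipschitz functions is
locally Lipschitz. -/
lemma locallyLipschitz_finset_inf' {ι : Type*} {s : Finset ι} (hs : s.Nonempty)
    (f : ι → ℝ → ℝ) (hf : ∀ i, LocallyLipschitz (f i)) :
    LocallyLipschitz fun t => s.inf' hs fun i => f i t := by
  induction hs using Finset.Nonempty.cons_induction with
  | singleton a => simpa using hf a
  | cons a s h hs ih =>
      have heq : (fun t => (Finset.cons a s h).inf' (Finset.cons_nonempty h) fun i => f i t)
          = fun t => min (f a t) (s.inf' hs fun i => f i t) := by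
        funext t
        exact Finset.inf'_cons hs (fun i => f i t)
      rw [heq]
      exact (hf a).min ih

end Aux

/-- Comparison step for the identical-interest convergence proof: the differential
inequality on the minimizing coordinate of `Γ_s - u_s` transfers, by a Grönwall-type
comparison, to a lower bound by the solution of the associated linear ODE. -/
theorem stmt_19 (S : Type*) [Fintype S] [Nonempty S]
    (δ C a : ℝ) (hδ : δ ∈ Set.Ioo (0:ℝ) 1) (hC : 0 < C) (ha : 0 < a)
    (β : ℝ → ℝ) (hβcont : Continuous β) (hβpos : ∀ t, 0 < β t)
    (hβdec : ∀ s t, s ≤ t → β t ≤ β s)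
    (hβint : Filter.Tendsto (fun t => ∫ v in (0:ℝ)..t, β v) Filter.atTop Filter.atTop)
    (Γ u : S → ℝ → ℝ)
    (hΓlip : ∀ s, LocallyLipschitz (Γ s)) (hulip : ∀ s, LocallyLipschitz (u s))
    (hode : ∀ s t, HasDerivAt (u s) (β t * (Γ s t - u s t)) t)
    -- `smin t` is a minimizing state of `s ↦ Γ s t - u s t`
    (smin : ℝ → S)
    (hmin : ∀ t s, Γ (smin t) t - u (smin t) t ≤ Γ s t - u s t)
    -- differential inequality on the minimum, almost everywhere
    (hder : ∀ᵐ t ∂(volume : Measure ℝ), 0 ≤ t →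
      -2 * C * Real.exp (-a * t)
        + β t * (δ - 1) * (Γ (smin t) t - u (smin t) t)
        ≤ deriv (fun τ => Γ (smin τ) τ - u (smin τ) τ) t)
    -- `y` solves the comparison ODE with initial condition the minimum at time `0`
    (y : ℝ → ℝ)
    (hy : ∀ t, HasDerivAt y (-2 * C * Real.exp (-a * t) + β t * (δ - 1) * y t) t)
    (hy0 : y 0 = Γ (smin 0) 0 - u (smin 0) 0) :
    ∀ s, ∀ t, 0 ≤ t → y t ≤ Γ s t - u s t := by
  set m : ℝ → ℝ := fun τ => Γ (smin τ) τ - u (smin τ) τ with hm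
  -- `m` is the pointwise minimum, hence locally Lipschitz
  have hmeq : m = fun t => Finset.univ.inf' Finset.univ_nonempty fun s => Γ s t - u s t := by
    funext t
    apply le_antisymm
    · exact Finset.le_inf' _ _ fun s _ => hmin t s
    · exact Finset.inf'_le _ (Finset.mem_univ (smin t))
  have hmlip : LocallyLipschitz m := by
    rw [hmeq]
    exact locallyLipschitz_finset_inf' Finset.univ_nonempty _
      fun s => (hΓlip s).sub (hulip s)
  -- `y` is C¹, hence locally Lipschitz
  have hyd : Differentiable ℝ y := fun t => (hy t).differentiableAt
  have hyderiv : deriv y = fun t => -2 * C * Real.exp (-a * t) + β t * (δ - 1) * y t :=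
    funext fun t => (hy t).deriv
  have hycont' : Continuous (deriv y) := by
    rw [hyderiv]
    exact (continuous_const.mul ((continuous_const.mul continuous_id).rexp)).add
      ((hβcont.mul continuous_const).mul hyd.continuous)
  have hylip : LocallyLipschitz y := (contDiff_one_iff_deriv.2 ⟨hyd, hycont'⟩).locallyLipschitz
  -- the integrating factor
  set B : ℝ → ℝ := fun r => ∫ v in (0:ℝ)..r, β v with hB
  have hBd : ∀ r, HasDerivAt B (β r) r := fun r =>
    intervalIntegral.integral_hasDerivAt_right (hβcont.intervalIntegrable _ _)
      (hβcont.stronglyMeasurableAtFilter _ _) hβcont.continuousAt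
  set E : ℝ → ℝ := fun r => Real.exp ((1 - δ) * B r) with hE
  have hEd : ∀ r, HasDerivAt E ((1 - δ) * β r * E r) r := by
    intro r
    have h1 := ((hBd r).const_mul (1 - δ)).exp
    convert h1 using 1
    simp only [hE]
    ring
  have hEdiff : Differentiable ℝ E := fun r => (hEd r).differentiableAt
  have hEderiv : deriv E = fun r => (1 - δ) * β r * E r := funext fun r => (hEd r).deriv
  have hEcont' : Continuous (deriv E) := by
    rw [hEderiv]
    exact ((continuous_const.mul hβcont).mul hEdiff.continuous)
  have hElip : LocallyLipschitz E := (contDiff_one_iff_deriv.2 ⟨hEdiff, hEcont'⟩).locallyLipschitz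
  have hEpos : ∀ r, 0 < E r := fun r => Real.exp_pos _
  set w : ℝ → ℝ := fun r => (m r - y r) * E r with hw
  have hwlip : LocallyLipschitz w := locallyLipschitz_mul (hmlip.sub hylip) hElip
  have hw0 : w 0 = 0 := by
    simp only [hw, hm]
    rw [← hy0]
    ring
  -- a.e. nonnegativity of `deriv w` on `[0,∞)`
  have hwd : ∀ᵐ x ∂(volume : Measure ℝ), 0 ≤ x → 0 ≤ deriv w x := by
    filter_upwards [hder, locallyLipschitz_ae_differentiable hmlip] with x h1 h2
    intro hx0
    have hm' : HasDerivAt m (deriv m x) x := h2.hasDerivAt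
    have hzd : HasDerivAt (fun r => m r - y r)
        (deriv m x - (-2 * C * Real.exp (-a * x) + β x * (δ - 1) * y x)) x :=
      hm'.sub (hy x)
    have hwd' : HasDerivAt w
        ((deriv m x - (-2 * C * Real.exp (-a * x) + β x * (δ - 1) * y x)) * E x
          + (m x - y x) * ((1 - δ) * β x * E x)) x := hzd.mul (hEd x)
    rw [hwd'.deriv]
    have hineq : -2 * C * Real.exp (-a * x) + β x * (δ - 1) * m x ≤ deriv m x := h1 hx0
    have hfac : 0 ≤ deriv m x - (-2 * C * Real.exp (-a * x) + β x * (δ - 1) * y x)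
        + (m x - y x) * ((1 - δ) * β x) := by nlinarith [hineq]
    have heq : (deriv m x - (-2 * C * Real.exp (-a * x) + β x * (δ - 1) * y x)) * E x
          + (m x - y x) * ((1 - δ) * β x * E x)
        = (deriv m x - (-2 * C * Real.exp (-a * x) + β x * (δ - 1) * y x)
          + (m x - y x) * ((1 - δ) * β x)) * E x := by ring
    rw [heq]
    exact mul_nonneg hfac (hEpos x).le
  intro s t ht
  have hmono := locallyLipschitz_mono_of_deriv_nonneg hwlip hwd ht
  rw [hw0] at hmono
  have hzt : 0 ≤ m t - y t := by
    by_contra hcon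
    push_neg at hcon
    have hmono' : 0 ≤ (m t - y t) * E t := hmono
    nlinarith [hEpos t, hmono']
  have := hmin t s
  simp only [hm] at hzt
  linarith
end
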